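/- Let the dependency graph G = (V,E) be acyclic, Σ(i,i) = σ₁² for all i ∈ V, and Σ(i,j) = σ₁² g_{ij} with |g_{ij}| ≤ M < 1 for (i,j) ∈ E. Then the log-likelihood ratio log(p₀(y)/p₁(y)) between N(0,σ₀²I) and the GMRF N(0,Σ) equals n·log(σ₁/σ₀) + (1/2)[ (1/σ₁² − 1/σ₀²) Σ_{i∈V} y_i² + Σ_{(i,j)∈E, i<j} ( log(1−g_{ij}²) + (g_{ij}²/(1−g_{ij}²))·(y_i²+y_j²)/σ₁² − (2g_{ij}/(1−g_{ij}²))·y_i y_j/σ₁² ) ]. -/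

import Mathlib

/-!
Row `i` of `Σ⁻¹ Σ = 1` involves `Σ` only on `{i} ∪ N(i)`, since `Σ⁻¹` vanishes off the graph,
and there the Markov relation `Σ(j,k) = Σ(i,j) Σ(i,k) / Σ(i,i)` determines it. Solving these
equations recovers Theorem 1: `σ₁² Σ⁻¹` has diagonal `1 + ∑ₖ g²/(1 - g²)` and entries
`-g/(1 - g²)` on edges. For a forest this matrix has determinant `∏_{edges} (1 - g²)⁻¹`: at a
leaf `u` with neighbour `x`, adding `g` times row and column `u` to row and column `x` deletes
the edge `ux` and leaves `(1 - g²)⁻¹` as the only entry of row `u`. Substituting `|Σ|` and the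
quadratic form `yᵀ Σ⁻¹ y`, expanded edge by edge, into the two Gaussian log-densities gives the
formula.
-/

open Matrix Finset

noncomputable def mvgpdf {n : ℕ} (S : Matrix (Fin n) (Fin n) ℝ) (y : Fin n → ℝ) : ℝ :=
  (1 / Real.sqrt ((2 * Real.pi) ^ n * S.det)) *
    Real.exp (-(1 / 2) * (y ⬝ᵥ (S⁻¹ *ᵥ y)))

namespace SimpleGraph

variable {V : Type*} {G : SimpleGraph V}

lemma IsAcyclic.exists_adj_forall_adj_eq [Finite V] (hG : G.IsAcyclic) {a b : V}
    (hab : G.Adj a b) : ∃ u x, G.Adj u x ∧ ∀ w, G.Adj u w → w = x := by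
  have : Nonempty V := ⟨a⟩
  obtain ⟨u, v, p, hp, hmax⟩ := Walk.exists_isPath_forall_isPath_length_le_length G
  have hnil : ¬p.Nil := by
    rw [← Walk.length_eq_zero_iff]
    have := hmax a b (Walk.cons hab .nil) (by simp [hab.ne])
    simp only [Walk.length_cons, Walk.length_nil, zero_add] at this
    omega
  refine ⟨u, p.snd, p.adj_snd hnil, fun w hw => hG.eq_snd_of_adj_start hp hw ?_⟩
  by_contra hw'
  have := hmax w v (p.cons hw.symm) (hp.cons hw')
  simp at this

lemma not_deleteEdges_adj_of_leaf {u x : V} (hleaf : ∀ w, G.Adj u w → w = x) (w : V) :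
    ¬(G.deleteEdges {s(u, x)}).Adj u w := by
  rw [deleteEdges_adj]
  exact fun h => h.2 (by rw [hleaf w h.1]; rfl)

section Finite

variable [Fintype V] [DecidableRel G.Adj]

lemma sum_eq_add_sum_neighborFinset [DecidableEq V] {M : Type*} [AddCommMonoid M] (i : V)
    {f : V → M} (hf : ∀ j, j ≠ i → ¬G.Adj i j → f j = 0) :
    ∑ j, f j = f i + ∑ j ∈ G.neighborFinset i, f j := by
  rw [← sum_insert (by simp)]
  refine (sum_subset (subset_univ _) fun j _ hj => hf j ?_ ?_).symm <;> simp_all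

variable [LinearOrder V]

lemma sum_sum_neighborFinset_eq_sum_lt {M : Type*} [AddCommMonoid M] (F : V → V → M) :
    ∑ i, ∑ j ∈ G.neighborFinset i, F i j =
      ∑ p ∈ univ.filter (fun p : V × V => p.1 < p.2 ∧ G.Adj p.1 p.2),
        (F p.1 p.2 + F p.2 p.1) := by
  have hadj : ∑ i, ∑ j ∈ G.neighborFinset i, F i j =
      ∑ p ∈ univ.filter (fun p : V × V => G.Adj p.1 p.2), F p.1 p.2 := by
    rw [sum_filter, Fintype.sum_prod_type]
    simp_rw [neighborFinset_eq_filter, sum_filter]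
  have hswap : ∑ p ∈ univ.filter (fun p : V × V => G.Adj p.1 p.2 ∧ ¬p.1 < p.2), F p.1 p.2 =
      ∑ p ∈ univ.filter (fun p : V × V => p.1 < p.2 ∧ G.Adj p.1 p.2), F p.2 p.1 := by
    refine sum_nbij' Prod.swap Prod.swap ?_ ?_ (by simp) (by simp) (by simp)
    · simp only [mem_filter, mem_univ, true_and, Prod.fst_swap, Prod.snd_swap]
      exact fun p ⟨h, hlt⟩ => ⟨lt_of_le_of_ne (not_lt.mp hlt) h.ne', h.symm⟩
    · simp only [mem_filter, mem_univ, true_and, Prod.fst_swap, Prod.snd_swap]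
      exact fun p ⟨hlt, h⟩ => ⟨h.symm, not_lt.mpr hlt.le⟩
  rw [hadj, ← sum_filter_add_sum_filter_not _ (fun p : V × V => p.1 < p.2), filter_filter,
    filter_filter, hswap, sum_add_distrib]
  simp only [and_comm]

lemma prod_edgeFinset_eq_prod_lt {M : Type*} [CommMonoid M] (f : Sym2 V → M) :
    ∏ e ∈ G.edgeFinset, f e =
      ∏ p ∈ univ.filter (fun p : V × V => p.1 < p.2 ∧ G.Adj p.1 p.2), f s(p.1, p.2) := by
  refine (prod_nbij' (fun p => s(p.1, p.2)) (fun e => (e.inf, e.sup)) ?_ ?_ ?_ ?_ ?_).symm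
  · simp only [mem_filter, mem_univ, true_and, mem_edgeFinset, mem_edgeSet]
    exact fun p h => h.2
  · intro e
    induction e with | h a b => ?_
    simp only [mem_filter, mem_univ, true_and, mem_edgeFinset, mem_edgeSet, Sym2.inf_mk,
      Sym2.sup_mk]
    intro h
    rcases lt_or_gt_of_ne h.ne with hab | hab
    · simpa [hab.le] using ⟨hab, h⟩
    · simpa [hab.le] using ⟨hab, h.symm⟩
  · simp only [mem_filter, mem_univ, true_and, Sym2.inf_mk, Sym2.sup_mk]
    exact fun p h => by simp [h.1.le]
  · intro e _
    induction e with | h a b => simp [Sym2.eq_swap, le_total]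
  · simp

end Finite

end SimpleGraph

section Precision

variable {V : Type*} [Fintype V] [DecidableEq V]

lemma det_eq_inv_mul_det_of_pendant {P P' : Matrix V V ℝ} {u x : V} (hxu : x ≠ u) (a : ℝ)
    (hPuu : P u u = (1 - a ^ 2)⁻¹) (hPux : P u x = -a / (1 - a ^ 2))
    (hPxu : P x u = -a / (1 - a ^ 2)) (hPu : ∀ j, j ≠ u → j ≠ x → P u j = 0 ∧ P j u = 0)
    (hP'u : ∀ j, P' u j = (1 : Matrix V V ℝ) u j) (hP'u' : ∀ i, i ≠ u → P' i u = 0)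
    (hP'x : P' x x = P x x - a ^ 2 / (1 - a ^ 2))
    (hP'P : ∀ i j, i ≠ u → j ≠ u → ¬(i = x ∧ j = x) → P' i j = P i j) :
    P.det = (1 - a ^ 2)⁻¹ * P'.det := by
  set Q := P.updateRow x (P x + a • P u)
  have hreduce : Q.updateCol x (fun i => Q i x + a • Q i u) =
      P'.updateRow u ((1 - a ^ 2)⁻¹ • P' u) := by
    ext i j
    simp only [Q, updateCol_apply, updateRow_apply, Pi.add_apply, Pi.smul_apply, smul_eq_mul]
    rcases eq_or_ne u i with rfl | hiu
    · rcases eq_or_ne x j with rfl | hjx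
      · simp [hxu.symm, hPux, hPuu, hP'u]
        field_simp
        ring
      rcases eq_or_ne u j with rfl | hju
      · simp [hxu.symm, hPuu, hP'u]
      · simp [hjx.symm, hxu.symm, (hPu j hju.symm hjx.symm).1, hP'u, one_apply_ne hju]
    rcases eq_or_ne x i with rfl | hix
    · rcases eq_or_ne x j with rfl | hjx
      · simp [hxu, hPxu, hPux, hPuu, hP'x]
        field_simp
        ring
      rcases eq_or_ne u j with rfl | hju
      · simp [hxu, hxu.symm, hPxu, hPuu, hP'u' x hxu]
        field_simp
        ring
      · simp [hjx.symm, hiu.symm, (hPu j hju.symm hjx.symm).1,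
          hP'P x j hiu.symm hju.symm (by tauto)]
    rcases eq_or_ne x j with rfl | hjx
    · simp [hix.symm, hiu.symm, (hPu i hiu.symm hix.symm).2, hP'P i x hiu.symm hxu (by tauto)]
    rcases eq_or_ne u j with rfl | hju
    · simp [hix.symm, hiu.symm, hjx.symm, (hPu i hiu.symm hix.symm).2, hP'u' i hiu.symm]
    · simp [hix.symm, hiu.symm, hjx.symm, hP'P i j hiu.symm hju.symm (by tauto)]
  rw [← det_updateRow_add_smul_self P hxu a, ← det_updateCol_add_smul_self Q hxu a,
    hreduce, det_updateRow_smul, updateRow_eq_self]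

/- `σ₁²` times the matrix `A` of Theorem 1, written through the edge correlations `c = g`. -/
noncomputable def gmrfPrecision (G : SimpleGraph V) [DecidableRel G.Adj] (c : V → V → ℝ) :
    Matrix V V ℝ :=
  of fun i j =>
    if i = j then 1 + ∑ k ∈ G.neighborFinset i, c i k ^ 2 / (1 - c i k ^ 2)
    else if G.Adj i j then -c i j / (1 - c i j ^ 2) else 0

section Apply

variable {G : SimpleGraph V} [DecidableRel G.Adj] {c : V → V → ℝ}

lemma gmrfPrecision_apply_self (i : V) :
    gmrfPrecision G c i i = 1 + ∑ k ∈ G.neighborFinset i, c i k ^ 2 / (1 - c i k ^ 2) := by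
  simp [gmrfPrecision]

lemma gmrfPrecision_apply_of_adj {i j : V} (h : G.Adj i j) :
    gmrfPrecision G c i j = -c i j / (1 - c i j ^ 2) := by
  simp [gmrfPrecision, h.ne, h]

lemma gmrfPrecision_apply_of_not_adj {i j : V} (hij : i ≠ j) (h : ¬G.Adj i j) :
    gmrfPrecision G c i j = 0 := by
  simp [gmrfPrecision, hij, h]

end Apply

section Leaf

variable {G : SimpleGraph V} {c : V → V → ℝ} {u x : V}
  [DecidableRel (G.deleteEdges {s(u, x)}).Adj]

lemma gmrfPrecision_deleteEdges_apply [DecidableRel G.Adj] {i j : V} (hi : i ≠ u) (hj : j ≠ u)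
    (hij : ¬(i = x ∧ j = x)) :
    gmrfPrecision (G.deleteEdges {s(u, x)}) c i j = gmrfPrecision G c i j := by
  have hadj : ∀ k, i ≠ x ∨ k ≠ u → ((G.deleteEdges {s(u, x)}).Adj i k ↔ G.Adj i k) := by
    intro k hk
    simp only [SimpleGraph.deleteEdges_adj, Set.mem_singleton_iff, Sym2.eq_iff]
    tauto
  rcases eq_or_ne i j with rfl | hne
  · have hN : (G.deleteEdges {s(u, x)}).neighborFinset i = G.neighborFinset i := by
      ext k
      simp only [SimpleGraph.mem_neighborFinset]
      exact hadj k (Or.inl fun h => hij ⟨h, h⟩)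
    rw [gmrfPrecision_apply_self, gmrfPrecision_apply_self, hN]
  · simp only [gmrfPrecision, of_apply, if_neg hne, hadj j (by tauto)]

lemma gmrfPrecision_deleteEdges_apply_right_self [DecidableRel G.Adj] (hux : G.Adj u x)
    (hc : c x u = c u x) :
    gmrfPrecision (G.deleteEdges {s(u, x)}) c x x =
      gmrfPrecision G c x x - c u x ^ 2 / (1 - c u x ^ 2) := by
  have hN : G.neighborFinset x = insert u ((G.deleteEdges {s(u, x)}).neighborFinset x) := by
    ext k
    simp only [SimpleGraph.mem_neighborFinset, mem_insert, SimpleGraph.deleteEdges_adj,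
      Set.mem_singleton_iff, Sym2.eq_iff]
    have := hux.ne
    constructor
    · intro h; by_cases hk : k = u <;> tauto
    · rintro (rfl | ⟨h, -⟩)
      · exact hux.symm
      · exact h
  rw [gmrfPrecision_apply_self, gmrfPrecision_apply_self, hN, sum_insert (by simp), hc]
  ring

lemma gmrfPrecision_deleteEdges_apply_leaf_left (hleaf : ∀ w, G.Adj u w → w = x) (j : V) :
    gmrfPrecision (G.deleteEdges {s(u, x)}) c u j = (1 : Matrix V V ℝ) u j := by
  rcases eq_or_ne u j with rfl | hne
  · have hN : (G.deleteEdges {s(u, x)}).neighborFinset u = ∅ := by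
      ext w; simpa using SimpleGraph.not_deleteEdges_adj_of_leaf hleaf w
    simp [gmrfPrecision_apply_self, hN]
  · rw [gmrfPrecision_apply_of_not_adj hne (SimpleGraph.not_deleteEdges_adj_of_leaf hleaf j),
      one_apply_ne hne]

lemma gmrfPrecision_deleteEdges_apply_leaf_right (hleaf : ∀ w, G.Adj u w → w = x) {i : V}
    (hi : i ≠ u) : gmrfPrecision (G.deleteEdges {s(u, x)}) c i u = 0 :=
  gmrfPrecision_apply_of_not_adj hi fun h =>
    SimpleGraph.not_deleteEdges_adj_of_leaf hleaf i h.symm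

lemma det_gmrfPrecision_eq_of_leaf [DecidableRel G.Adj] (hux : G.Adj u x)
    (hleaf : ∀ w, G.Adj u w → w = x) (hc : c x u = c u x) (hcux : c u x ^ 2 ≠ 1) :
    (gmrfPrecision G c).det =
      (1 - c u x ^ 2)⁻¹ * (gmrfPrecision (G.deleteEdges {s(u, x)}) c).det := by
  have hNu : G.neighborFinset u = {x} := by
    ext w; simpa using ⟨hleaf w, fun h => h ▸ hux⟩
  refine det_eq_inv_mul_det_of_pendant hux.ne' (c u x) ?_ (gmrfPrecision_apply_of_adj hux) ?_
    (fun j hju hjx => ⟨gmrfPrecision_apply_of_not_adj hju.symm (mt (hleaf j) hjx),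
      gmrfPrecision_apply_of_not_adj hju fun h => hjx (hleaf j h.symm)⟩)
    (gmrfPrecision_deleteEdges_apply_leaf_left hleaf)
    (fun _ hi => gmrfPrecision_deleteEdges_apply_leaf_right hleaf hi)
    (gmrfPrecision_deleteEdges_apply_right_self hux hc)
    (fun _ _ hi hj hij => gmrfPrecision_deleteEdges_apply hi hj hij)
  · have : 1 - c u x ^ 2 ≠ 0 := sub_ne_zero.2 hcux.symm
    rw [gmrfPrecision_apply_self, hNu, sum_singleton]
    field_simp
    ring
  · rw [gmrfPrecision_apply_of_adj hux.symm, hc]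

end Leaf

variable {G : SimpleGraph V} [DecidableRel G.Adj] {c : V → V → ℝ}

theorem det_gmrfPrecision (hG : G.IsAcyclic) (hc : ∀ i j, G.Adj i j → c i j = c j i)
    (hc1 : ∀ i j, G.Adj i j → c i j ^ 2 ≠ 1) {f : Sym2 V → ℝ}
    (hf : ∀ i j, G.Adj i j → f s(i, j) = 1 - c i j ^ 2) :
    (gmrfPrecision G c).det = (∏ e ∈ G.edgeFinset, f e)⁻¹ := by
  induction h : #G.edgeFinset generalizing G with
  | zero =>
    have hE := card_eq_zero.1 h
    have hbot : ∀ i j, ¬G.Adj i j := fun i j hij => by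
      simpa [hE] using (show s(i, j) ∈ G.edgeFinset by simpa using hij)
    have hone : gmrfPrecision G c = 1 := by
      ext i j
      rcases eq_or_ne i j with rfl | hij
      · have hN : G.neighborFinset i = ∅ := by ext k; simp [hbot]
        simp [gmrfPrecision_apply_self, hN]
      · simp [gmrfPrecision_apply_of_not_adj hij (hbot i j), hij]
    rw [hone, det_one, hE, prod_empty, inv_one]
  | succ m ih =>
    obtain ⟨e, he⟩ := card_pos.1 (by omega : 0 < #G.edgeFinset)
    induction e with | h a b => ?_
    obtain ⟨u, x, hux, hleaf⟩ := hG.exists_adj_forall_adj_eq (G.mem_edgeFinset.1 he)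
    classical
    have hmem : s(u, x) ∈ G.edgeFinset := G.mem_edgeFinset.2 hux
    have hE : (G.deleteEdges {s(u, x)}).edgeFinset = G.edgeFinset.erase s(u, x) := by
      ext e
      simp [and_comm]
    have hle := G.deleteEdges_le {s(u, x)}
    rw [det_gmrfPrecision_eq_of_leaf hux hleaf (hc x u hux.symm) (hc1 u x hux),
      ih (hG.anti hle) (fun i j h => hc i j (hle h)) (fun i j h => hc1 i j (hle h))
        (fun i j h => hf i j (hle h)) (by rw [hE, card_erase_of_mem hmem, h]; rfl),
      hE, ← mul_prod_erase _ _ hmem, mul_inv, hf u x hux]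

variable {S : Matrix V V ℝ} {s : ℝ}

lemma inv_mul_apply_eq_sum_neighborFinset (hS : IsUnit S.det)
    (hzero : ∀ i j, i ≠ j → ¬G.Adj i j → S⁻¹ i j = 0) (i k : V) :
    S⁻¹ i i * S i k + ∑ j ∈ G.neighborFinset i, S⁻¹ i j * S j k = (1 : Matrix V V ℝ) i k := by
  rw [← nonsing_inv_mul S hS, mul_apply, G.sum_eq_add_sum_neighborFinset i]
  intro j hji hij
  rw [hzero i j hji.symm hij, zero_mul]

lemma inv_apply_of_adj (hs : s ≠ 0) (hS : IsUnit S.det) (hsymm : S.IsSymm)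
    (hdiag : ∀ i, S i i = s)
    (hc : ∀ i j, G.Adj i j → S i j = s * c i j) (hc1 : ∀ i j, G.Adj i j → c i j ^ 2 ≠ 1)
    (hzero : ∀ i j, i ≠ j → ¬G.Adj i j → S⁻¹ i j = 0)
    (hmarkov : ∀ i j k, G.Adj i j → G.Adj i k → j ≠ k → S j k = S i j * S i k / S i i)
    {i k : V} (hik : G.Adj i k) :
    S⁻¹ i k = s⁻¹ * (-c i k / (1 - c i k ^ 2)) := by
  have hterm : ∀ j ∈ G.neighborFinset i, S⁻¹ i j * S j k = S⁻¹ i j * S i j * c i k +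
      if j = k then S⁻¹ i k * (s * (1 - c i k ^ 2)) else 0 := by
    intro j hj
    split_ifs with hjk
    · subst hjk
      rw [hdiag, hc i j hik]
      ring
    · rw [add_zero, hmarkov i j k ((G.mem_neighborFinset i j).1 hj) hik hjk, hdiag, hc i k hik]
      field_simp
  have hrow := inv_mul_apply_eq_sum_neighborFinset hS hzero i k
  have hrow_self := inv_mul_apply_eq_sum_neighborFinset hS hzero i i
  rw [sum_congr rfl hterm, sum_add_distrib, ← sum_mul, sum_ite_eq',
    if_pos ((G.mem_neighborFinset i k).2 hik), one_apply_ne hik.ne, hc i k hik] at hrow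
  simp only [hdiag, hsymm.apply, one_apply_eq] at hrow_self
  have : 1 - c i k ^ 2 ≠ 0 := sub_ne_zero.2 (hc1 i k hik).symm
  field_simp
  linear_combination hrow - c i k * hrow_self

theorem inv_eq_smul_gmrfPrecision (hs : s ≠ 0) (hS : IsUnit S.det) (hsymm : S.IsSymm)
    (hdiag : ∀ i, S i i = s) (hc : ∀ i j, G.Adj i j → S i j = s * c i j)
    (hc1 : ∀ i j, G.Adj i j → c i j ^ 2 ≠ 1)
    (hzero : ∀ i j, i ≠ j → ¬G.Adj i j → S⁻¹ i j = 0)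
    (hmarkov : ∀ i j k, G.Adj i j → G.Adj i k → j ≠ k → S j k = S i j * S i k / S i i) :
    S⁻¹ = s⁻¹ • gmrfPrecision G c := by
  have hadj {i k : V} (hik : G.Adj i k) :=
    inv_apply_of_adj hs hS hsymm hdiag hc hc1 hzero hmarkov hik
  have hself : ∀ i, S⁻¹ i i =
      s⁻¹ * (1 + ∑ k ∈ G.neighborFinset i, c i k ^ 2 / (1 - c i k ^ 2)) := by
    intro i
    have hterm : ∀ j ∈ G.neighborFinset i,
        S⁻¹ i j * S i j = -(c i j ^ 2 / (1 - c i j ^ 2)) := by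
      intro j hj
      rw [hadj ((G.mem_neighborFinset i j).1 hj), hc i j ((G.mem_neighborFinset i j).1 hj)]
      field_simp
    have h := inv_mul_apply_eq_sum_neighborFinset hS hzero i i
    simp only [hdiag, hsymm.apply, one_apply_eq] at h
    rw [sum_congr rfl hterm, sum_neg_distrib] at h
    rw [eq_inv_mul_iff_mul_eq₀ hs]
    linarith
  ext i k
  rcases eq_or_ne i k with rfl | hik
  · simp [hself, gmrfPrecision_apply_self]
  by_cases h : G.Adj i k
  · simp [hadj h, gmrfPrecision_apply_of_adj h]
  · simp [hzero i k hik h, gmrfPrecision_apply_of_not_adj hik h]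

end Precision

section Ordered

variable {V : Type*} [Fintype V] [LinearOrder V] {G : SimpleGraph V} [DecidableRel G.Adj]
  {c : V → V → ℝ}

theorem det_eq_of_inv_eq_smul_gmrfPrecision {S : Matrix V V ℝ} {s : ℝ} (hG : G.IsAcyclic)
    (hc : ∀ i j, G.Adj i j → c i j = c j i) (hc1 : ∀ i j, G.Adj i j → c i j ^ 2 ≠ 1)
    (hinv : S⁻¹ = s⁻¹ • gmrfPrecision G c) :
    S.det = s ^ Fintype.card V *
      ∏ p ∈ univ.filter (fun p : V × V => p.1 < p.2 ∧ G.Adj p.1 p.2), (1 - c p.1 p.2 ^ 2) := by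
  let f : Sym2 V → ℝ := fun e => 1 - c e.inf e.sup ^ 2
  have hf : ∀ i j, G.Adj i j → f s(i, j) = 1 - c i j ^ 2 := by
    intro i j h
    rcases le_total i j with hij | hij
    · simp [f, hij]
    · simp [f, hij, hc i j h]
  have hdet := congrArg det hinv
  rw [det_nonsing_inv, Ring.inverse_eq_inv, det_smul, det_gmrfPrecision hG hc hc1 hf,
    G.prod_edgeFinset_eq_prod_lt, prod_congr rfl fun p hp => hf _ _ (mem_filter.1 hp).2.2]
    at hdet
  rw [← inv_inv S.det, hdet, mul_inv, inv_pow, inv_inv, inv_inv]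

lemma dotProduct_gmrfPrecision_mulVec (hc : ∀ i j, G.Adj i j → c i j = c j i) (y : V → ℝ) :
    y ⬝ᵥ (gmrfPrecision G c *ᵥ y) = ∑ i, y i ^ 2 +
      ∑ p ∈ univ.filter (fun p : V × V => p.1 < p.2 ∧ G.Adj p.1 p.2),
        (c p.1 p.2 ^ 2 / (1 - c p.1 p.2 ^ 2) * (y p.1 ^ 2 + y p.2 ^ 2) -
          2 * c p.1 p.2 / (1 - c p.1 p.2 ^ 2) * (y p.1 * y p.2)) := by
  have hrow : ∀ i, y i * (gmrfPrecision G c *ᵥ y) i = y i ^ 2 + ∑ j ∈ G.neighborFinset i,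
      (c i j ^ 2 / (1 - c i j ^ 2) * y i ^ 2 - c i j / (1 - c i j ^ 2) * (y i * y j)) := by
    intro i
    have hadj : ∀ j ∈ G.neighborFinset i, y i * (gmrfPrecision G c i j * y j) =
        -(c i j / (1 - c i j ^ 2) * (y i * y j)) := fun j hj => by
      rw [gmrfPrecision_apply_of_adj ((G.mem_neighborFinset i j).1 hj)]
      ring
    rw [mulVec, dotProduct, mul_sum, G.sum_eq_add_sum_neighborFinset i, sum_congr rfl hadj,
      gmrfPrecision_apply_self, sum_sub_distrib, ← sum_mul, sum_neg_distrib]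
    · ring
    · intro j hji hij
      rw [gmrfPrecision_apply_of_not_adj hji.symm hij, zero_mul, mul_zero]
  rw [dotProduct, sum_congr rfl fun i _ => hrow i, sum_add_distrib,
    G.sum_sum_neighborFinset_eq_sum_lt]
  congr 1
  exact sum_congr rfl fun p hp => by rw [hc p.2 p.1 (mem_filter.1 hp).2.2.symm]; ring

end Ordered

section Density

variable {n : ℕ}

lemma mvgpdf_pos {S : Matrix (Fin n) (Fin n) ℝ} (hS : 0 < S.det) (y : Fin n → ℝ) :
    0 < mvgpdf S y := by
  unfold mvgpdf
  positivity

lemma log_mvgpdf {S : Matrix (Fin n) (Fin n) ℝ} (hS : 0 < S.det) (y : Fin n → ℝ) :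
    Real.log (mvgpdf S y) =
      -(n * Real.log (2 * Real.pi) + Real.log S.det) / 2 - y ⬝ᵥ (S⁻¹ *ᵥ y) / 2 := by
  rw [mvgpdf, Real.log_mul (by positivity) (Real.exp_pos _).ne', Real.log_exp, one_div,
    Real.log_inv, Real.log_sqrt (by positivity), Real.log_mul (by positivity) hS.ne',
    Real.log_pow]
  ring

lemma log_mvgpdf_smul_one {t : ℝ} (ht : 0 < t) (y : Fin n → ℝ) :
    Real.log (mvgpdf (t • (1 : Matrix (Fin n) (Fin n) ℝ)) y) =
      -(n * Real.log (2 * Real.pi) + n * Real.log t) / 2 - (∑ i, y i ^ 2) / (2 * t) := by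
  rw [log_mvgpdf (by simp; positivity), det_smul, det_one, mul_one, Fintype.card_fin,
    Real.log_pow, inv_eq_left_inv (B := t⁻¹ • 1) (by simp [smul_smul, ht.ne']), smul_mulVec,
    one_mulVec, dotProduct_smul, smul_eq_mul]
  simp only [dotProduct, sq]
  ring

end Density

theorem stmt_14_general {n : ℕ} (G : SimpleGraph (Fin n)) [DecidableRel G.Adj]
    (hac : G.IsAcyclic)
    (S : Matrix (Fin n) (Fin n) ℝ) (hpd : S.PosDef)
    (σ₀ σ₁ M : ℝ) (h0 : 0 < σ₀) (h1 : 0 < σ₁) (hM : M < 1)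
    (g : Fin n → Fin n → ℝ)
    (hdiag : ∀ i, S i i = σ₁ ^ 2)
    (hedge : ∀ i j, G.Adj i j → S i j = σ₁ ^ 2 * g i j ∧ |g i j| ≤ M)
    (hzero : ∀ i j : Fin n, i ≠ j → ¬ G.Adj i j → S⁻¹ i j = 0)
    (hmarkov : ∀ i j k : Fin n, G.Adj i j → G.Adj i k → j ≠ k →
      S j k = S i j * S i k / S i i)
    (y : Fin n → ℝ) :
    Real.log (mvgpdf ((σ₀ ^ 2) • (1 : Matrix (Fin n) (Fin n) ℝ)) y / mvgpdf S y) =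
      n * Real.log (σ₁ / σ₀) +
      (1 / 2) * ((1 / σ₁ ^ 2 - 1 / σ₀ ^ 2) * ∑ i, y i ^ 2 +
        ∑ p ∈ Finset.univ.filter (fun p : Fin n × Fin n => p.1 < p.2 ∧ G.Adj p.1 p.2),
          (Real.log (1 - g p.1 p.2 ^ 2) +
            (g p.1 p.2 ^ 2 / (1 - g p.1 p.2 ^ 2)) * (y p.1 ^ 2 + y p.2 ^ 2) / σ₁ ^ 2 -
            (2 * g p.1 p.2 / (1 - g p.1 p.2 ^ 2)) * (y p.1 * y p.2) / σ₁ ^ 2)) := by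
  have hS : S.IsSymm := isHermitian_iff_isSymm.1 hpd.isHermitian
  have hs : σ₁ ^ 2 ≠ 0 := by positivity
  have hg : ∀ i j, G.Adj i j → g i j = g j i := fun i j h => mul_left_cancel₀ hs <| by
    rw [← (hedge i j h).1, ← (hedge j i h.symm).1, hS.apply]
  have hg1 : ∀ i j, G.Adj i j → g i j ^ 2 < 1 := fun i j h => by
    nlinarith [sq_abs (g i j), abs_nonneg (g i j), (hedge i j h).2]
  have hinv := inv_eq_smul_gmrfPrecision hs hpd.det_pos.ne'.isUnit hS hdiag
    (fun i j h => (hedge i j h).1) (fun i j h => (hg1 i j h).ne) hzero hmarkov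
  have hdet := det_eq_of_inv_eq_smul_gmrfPrecision hac hg (fun i j h => (hg1 i j h).ne) hinv
  have hprod : 0 < ∏ p ∈ univ.filter (fun p : Fin n × Fin n => p.1 < p.2 ∧ G.Adj p.1 p.2),
      (1 - g p.1 p.2 ^ 2) :=
    prod_pos fun p hp => sub_pos.2 (hg1 _ _ (mem_filter.1 hp).2.2)
  rw [Real.log_div (mvgpdf_pos (by simp; positivity) y).ne' (mvgpdf_pos hpd.det_pos y).ne',
    log_mvgpdf_smul_one (by positivity), log_mvgpdf hpd.det_pos, hdet, hinv, smul_mulVec,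
    dotProduct_smul, smul_eq_mul, dotProduct_gmrfPrecision_mulVec hg, Fintype.card_fin,
    Real.log_mul (by positivity) hprod.ne',
    Real.log_prod fun p hp => (sub_pos.2 (hg1 _ _ (mem_filter.1 hp).2.2)).ne',
    Real.log_pow, Real.log_pow, Real.log_pow, Real.log_div h1.ne' h0.ne']
  simp only [sum_add_distrib, sum_sub_distrib, ← sum_div]
  push_cast
  ring

/-- Log-likelihood ratio of i.i.d. N(0,σ₀²) against a GMRF with acyclic dependency
graph, unit-variance σ₁² and edge correlations g i j. -/
theorem stmt_14 {n : ℕ} (G : SimpleGraph (Fin n)) [DecidableRel G.Adj]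
    (hac : G.IsAcyclic)
    (S : Matrix (Fin n) (Fin n) ℝ) (hsymm : S.IsSymm) (hpd : S.PosDef)
    (σ₀ σ₁ M : ℝ) (h0 : 0 < σ₀) (h1 : 0 < σ₁) (hM : M < 1)
    (g : Fin n → Fin n → ℝ)
    (hdiag : ∀ i, S i i = σ₁ ^ 2)
    (hedge : ∀ i j, G.Adj i j → S i j = σ₁ ^ 2 * g i j ∧ |g i j| ≤ M)
    (hzero : ∀ i j : Fin n, i ≠ j → ¬ G.Adj i j → S⁻¹ i j = 0)
    (hmarkov : ∀ i j k : Fin n, G.Adj i j → G.Adj i k → j ≠ k →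
      S j k = S i j * S i k / S i i)
    (y : Fin n → ℝ) :
    Real.log (mvgpdf ((σ₀ ^ 2) • (1 : Matrix (Fin n) (Fin n) ℝ)) y / mvgpdf S y) =
      n * Real.log (σ₁ / σ₀) +
      (1 / 2) * ((1 / σ₁ ^ 2 - 1 / σ₀ ^ 2) * ∑ i, y i ^ 2 +
        ∑ p ∈ Finset.univ.filter (fun p : Fin n × Fin n => p.1 < p.2 ∧ G.Adj p.1 p.2),
          (Real.log (1 - g p.1 p.2 ^ 2) +
            (g p.1 p.2 ^ 2 / (1 - g p.1 p.2 ^ 2)) * (y p.1 ^ 2 + y p.2 ^ 2) / σ₁ ^ 2 -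
            (2 * g p.1 p.2 / (1 - g p.1 p.2 ^ 2)) * (y p.1 * y p.2) / σ₁ ^ 2)) :=
  stmt_14_general G hac S hpd σ₀ σ₁ M h0 h1 hM g hdiag hedge hzero hmarkov y
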